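/- arXiv:2209.12554 — 4 statements merged into one kernel-verified Lean document; each statement's English description precedes it below -/
import Mathlib

section
/- Let (X, ‖·‖) be a Banach space and T : X → X a mapping. Suppose there exist b ∈ [0, ∞) and θ ∈ [0, b+1), and set λ = 1/(b+1) and r = θλ, such that for all x, y ∈ X: ψ(r)‖x − Tx‖ ≤ ‖x − y‖ implies ‖b(x − y) + Tx − Ty‖ ≤ θ‖x − y‖. Then T has a unique fixed point. -/
/-- The function ψ from the paper: ψ(r) = λ on [0, (√5−1)/2],
    λ(1−r)/r² on ((√5−1)/2, 1/√2), and λ/(1+r) on [1/√2, 1). -/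
noncomputable def suzukiPsi (lam r : ℝ) : ℝ :=
  if r ≤ (Real.sqrt 5 - 1) / 2 then lam
  else if r < 1 / Real.sqrt 2 then lam * (1 - r) / r ^ 2
  else lam / (1 + r)

/-!
The averaged map `S = (1 - λ) id + λ T = λ (b id + T)` has the same fixed points as `T`, and the hypothesis says
exactly that `S` satisfies Suzuki's condition `ψ(r)/λ · d(x, S x) ≤ d(x, y) → d(S x, S y) ≤ r d(x, y)`,
so Suzuki's generalization of the Banach contraction principle applies to `S`.

For Suzuki's theorem, the Picard orbit of `S` is Cauchy since `d(S x, S² x) ≤ r d(x, S x)`; let `z` be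
its limit. Passing to the limit along the orbit gives `d(S x, z) ≤ r d(x, z)` for `x ≠ z`. For
`r < 1/√2`, applying the condition to `S² z` and `z` yields `d(z, S z) ≤ 2 r² d(z, S z)`. For
`r ≥ 1/√2`, of any two consecutive orbit points at least one satisfies the premise of the condition
with `y = z`, which forces `S z = z`.
-/

open Filter Topology Function

section SuzukiPsi

variable {r : ℝ}

theorem suzukiPsi_eq_mul (lam r : ℝ) : suzukiPsi lam r = lam * suzukiPsi 1 r := by
  unfold suzukiPsi
  split_ifs <;> ring

theorem suzukiPsi_one_nonneg (hr1 : r < 1) : 0 ≤ suzukiPsi 1 r := by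
  unfold suzukiPsi
  split_ifs with h₁ h₂
  · exact zero_le_one
  · exact div_nonneg (by linarith) (sq_nonneg r)
  · have : 0 < 1 / Real.sqrt 2 := by positivity
    exact div_nonneg zero_le_one (by linarith)

theorem suzukiPsi_one_le_one (hr0 : 0 ≤ r) : suzukiPsi 1 r ≤ 1 := by
  have h5 : Real.sqrt 5 ^ 2 = 5 := Real.sq_sqrt (by norm_num)
  unfold suzukiPsi
  split_ifs with h₁ h₂
  · exact le_rfl
  · have hr : 0 < r := by nlinarith [Real.sqrt_nonneg 5]
    rw [div_le_one (by positivity)]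
    nlinarith [Real.sqrt_nonneg 5]
  · rw [div_le_one (by linarith)]
    linarith

theorem suzukiPsi_one_cases (hr0 : 0 ≤ r) :
    (suzukiPsi 1 r * r ^ 2 ≤ 1 - r ∧ 2 * r ^ 2 < 1) ∨ suzukiPsi 1 r * (1 + r) ≤ 1 := by
  have h5 : Real.sqrt 5 ^ 2 = 5 := Real.sq_sqrt (by norm_num)
  have h2 : Real.sqrt 2 ^ 2 = 2 := Real.sq_sqrt (by norm_num)
  unfold suzukiPsi
  split_ifs with h₁ h₂
  · have h5' : 2 < Real.sqrt 5 := by nlinarith [Real.sqrt_nonneg 5]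
    left
    constructor <;> nlinarith [mul_le_mul h₁ h₁ hr0 (by linarith)]
  · left
    have hr : 0 < r := by nlinarith [Real.sqrt_nonneg 5]
    have hr2 : r * Real.sqrt 2 < 1 := (lt_div_iff₀ (by positivity)).mp h₂
    refine ⟨by rw [div_mul_cancel₀ _ (by positivity), one_mul], ?_⟩
    nlinarith [Real.sqrt_nonneg 2]
  · right
    rw [div_mul_cancel₀ _ (by linarith)]

end SuzukiPsi

def SuzukiContraction {X : Type*} [MetricSpace X] (S : X → X) (φ r : ℝ) : Prop :=
  ∀ x y, φ * dist x (S x) ≤ dist x y → dist (S x) (S y) ≤ r * dist x y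

namespace SuzukiContraction

variable {X : Type*} [MetricSpace X] {S : X → X} {φ r : ℝ}

theorem dist_map_map_le (hS : SuzukiContraction S φ r) (hφ1 : φ ≤ 1) (x : X) :
    dist (S x) (S (S x)) ≤ r * dist x (S x) :=
  hS x (S x) (mul_le_of_le_one_left dist_nonneg hφ1)

theorem cauchySeq_iterate (hS : SuzukiContraction S φ r) (hφ1 : φ ≤ 1) (hr0 : 0 ≤ r)
    (hr1 : r < 1) (x : X) : CauchySeq fun n => S^[n] x := by
  refine cauchySeq_of_le_geometric r (dist x (S x)) hr1 fun n => ?_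
  induction n with
  | zero => simp
  | succ n ih =>
    calc dist (S^[n + 1] x) (S^[n + 1 + 1] x) = dist (S (S^[n] x)) (S (S (S^[n] x))) := by
          simp only [iterate_succ_apply']
      _ ≤ r * dist (S^[n] x) (S (S^[n] x)) := hS.dist_map_map_le hφ1 _
      _ ≤ r * (dist x (S x) * r ^ n) := by
          rw [← iterate_succ_apply' S n x]
          exact mul_le_mul_of_nonneg_left ih hr0
      _ = dist x (S x) * r ^ (n + 1) := by ring

theorem dist_map_le_of_tendsto_iterate (hS : SuzukiContraction S φ r) (hφ1 : φ ≤ 1)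
    {x₀ z : X} (hz : Tendsto (fun n => S^[n] x₀) atTop (𝓝 z)) {x : X} (hx : x ≠ z) :
    dist (S x) z ≤ r * dist x z := by
  have hz' : Tendsto (fun n => S^[n + 1] x₀) atTop (𝓝 z) := hz.comp (tendsto_add_atTop_nat 1)
  have hball := Metric.ball_mem_nhds z (div_pos (dist_pos.2 hx) three_pos)
  have hpremise : ∀ᶠ n in atTop, φ * dist (S^[n] x₀) (S (S^[n] x₀)) ≤ dist (S^[n] x₀) x := by
    filter_upwards [hz.eventually hball, hz'.eventually hball] with n h₀ h₁
    rw [iterate_succ_apply'] at h₁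
    have := mul_le_of_le_one_left (dist_nonneg (x := S^[n] x₀) (y := S (S^[n] x₀))) hφ1
    linarith [dist_triangle_right (S^[n] x₀) (S (S^[n] x₀)) z, dist_triangle_left x z (S^[n] x₀)]
  have hlim : dist z (S x) ≤ r * dist z x :=
    le_of_tendsto_of_tendsto (hz'.dist tendsto_const_nhds) ((hz.dist tendsto_const_nhds).const_mul r)
      (hpremise.mono fun n hn => by dsimp only; rw [iterate_succ_apply']; exact hS _ _ hn)
  rwa [dist_comm, dist_comm x]

theorem isFixedPt_of_two_mul_sq_lt (hS : SuzukiContraction S φ r) (hφ0 : 0 ≤ φ) (hφ1 : φ ≤ 1)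
    (hr0 : 0 ≤ r) (hφr : φ * r ^ 2 ≤ 1 - r) (hr : 2 * r ^ 2 < 1) {z : X}
    (hz : ∀ x ≠ z, dist (S x) z ≤ r * dist x z) : IsFixedPt S z := by
  by_contra hfix
  set a := dist z (S z)
  have ha : 0 < a := dist_pos.2 (Ne.symm hfix)
  have hr1 : r < 1 := by nlinarith
  have d₁ : dist (S z) (S (S z)) ≤ r * a := hS.dist_map_map_le hφ1 z
  have d₂ : dist (S (S z)) (S (S (S z))) ≤ r ^ 2 * a := by
    nlinarith [hS.dist_map_map_le hφ1 (S z)]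
  have e₁ : dist (S (S z)) z ≤ r * a := by
    simpa only [dist_comm (S z)] using hz (S z) hfix
  have hS2 : S (S z) ≠ z := by
    intro h
    have := hS.dist_map_map_le hφ1 (S z)
    rw [h, dist_comm (S z)] at this
    nlinarith
  have e₂ : dist (S (S (S z))) z ≤ r ^ 2 * a := by
    nlinarith [hz (S (S z)) hS2]
  have hlow : (1 - r) * a ≤ dist (S (S z)) z := by
    linarith [dist_triangle_right z (S z) (S (S z)), dist_comm z (S (S z))]
  have e₃ : dist (S (S (S z))) (S z) ≤ r ^ 2 * a := by
    have hpremise : φ * dist (S (S z)) (S (S (S z))) ≤ dist (S (S z)) z := by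
      nlinarith [mul_le_mul_of_nonneg_left d₂ hφ0]
    nlinarith [hS _ _ hpremise]
  nlinarith [dist_triangle_left z (S z) (S (S (S z)))]

theorem le_dist_or_le_dist (hS : SuzukiContraction S φ r) (hφ0 : 0 ≤ φ) (hr0 : 0 ≤ r)
    (hφr : φ * (1 + r) ≤ 1) (x z : X) :
    φ * dist x (S x) ≤ dist x z ∨ φ * dist (S x) (S (S x)) ≤ dist (S x) z := by
  by_contra! h
  have hstep := mul_le_mul_of_nonneg_left (hS.dist_map_map_le (by nlinarith) x) hφ0
  have := mul_le_of_le_one_left (dist_nonneg (x := x) (y := S x)) hφr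
  linarith [dist_triangle_right x (S x) z]

theorem isFixedPt_of_tendsto_iterate (hS : SuzukiContraction S φ r) (hφ0 : 0 ≤ φ)
    (hr0 : 0 ≤ r) (hφr : φ * (1 + r) ≤ 1) {x₀ z : X}
    (hz : Tendsto (fun n => S^[n] x₀) atTop (𝓝 z)) : IsFixedPt S z := by
  set g : ℕ → ℝ := fun n => dist z (S^[n + 1] x₀) + r * dist (S^[n] x₀) z
  have hg : Tendsto g atTop (𝓝 0) := by
    rw [show (0 : ℝ) = dist z z + r * dist z z by simp]
    exact (tendsto_const_nhds.dist (hz.comp (tendsto_add_atTop_nat 1))).add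
      ((hz.dist tendsto_const_nhds).const_mul r)
  have hbound : ∀ n, dist z (S z) ≤ g n + g (n + 1) := fun n => by
    simp only [g, iterate_succ_apply']
    rcases hS.le_dist_or_le_dist hφ0 hr0 hφr (S^[n] x₀) z with h | h
    · have : 0 ≤ dist z (S (S (S^[n] x₀))) + r * dist (S (S^[n] x₀)) z := by positivity
      linarith [hS _ _ h, dist_triangle z (S (S^[n] x₀)) (S z)]
    · have : 0 ≤ dist z (S (S^[n] x₀)) + r * dist (S^[n] x₀) z := by positivity
      linarith [hS _ _ h, dist_triangle z (S (S (S^[n] x₀))) (S z)]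
  have hle : dist z (S z) ≤ 0 := le_of_tendsto_of_tendsto' tendsto_const_nhds
    (by simpa using hg.add (hg.comp (tendsto_add_atTop_nat 1))) hbound
  exact (dist_le_zero.mp hle).symm

theorem exists_isFixedPt [CompleteSpace X] [Nonempty X] (hS : SuzukiContraction S φ r)
    (hφ0 : 0 ≤ φ) (hφ1 : φ ≤ 1) (hr0 : 0 ≤ r) (hr1 : r < 1)
    (hφr : (φ * r ^ 2 ≤ 1 - r ∧ 2 * r ^ 2 < 1) ∨ φ * (1 + r) ≤ 1) : ∃ z, IsFixedPt S z := by
  obtain ⟨x₀⟩ := ‹Nonempty X›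
  obtain ⟨z, hz⟩ := cauchySeq_tendsto_of_complete (hS.cauchySeq_iterate hφ1 hr0 hr1 x₀)
  refine ⟨z, ?_⟩
  rcases hφr with ⟨hφr, hr⟩ | hφr
  · exact hS.isFixedPt_of_two_mul_sq_lt hφ0 hφ1 hr0 hφr hr
      fun x hx => hS.dist_map_le_of_tendsto_iterate hφ1 hz hx
  · exact hS.isFixedPt_of_tendsto_iterate hφ0 hr0 hφr hz

theorem eq_of_isFixedPt (hS : SuzukiContraction S φ r) (hr1 : r < 1) {x y : X}
    (hx : IsFixedPt S x) (hy : IsFixedPt S y) : x = y := by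
  have h := hS x y (by rw [hx.eq, dist_self, mul_zero]; exact dist_nonneg)
  rw [hx.eq, hy.eq] at h
  exact dist_le_zero.mp (by nlinarith [dist_nonneg (x := x) (y := y)])

theorem existsUnique_isFixedPt_of_suzukiPsi [CompleteSpace X] [Nonempty X]
    (hS : SuzukiContraction S (suzukiPsi 1 r) r) (hr0 : 0 ≤ r) (hr1 : r < 1) :
    ∃! z, IsFixedPt S z := by
  obtain ⟨z, hz⟩ := hS.exists_isFixedPt (suzukiPsi_one_nonneg hr1) (suzukiPsi_one_le_one hr0)
    hr0 hr1 (suzukiPsi_one_cases hr0)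
  exact ⟨z, hz, fun y hy => hS.eq_of_isFixedPt hr1 hy hz⟩

end SuzukiContraction

section Krasnoselskii

variable {X : Type*} [NormedAddCommGroup X] [NormedSpace ℝ X] {T : X → X} {lam : ℝ}

def krasnoselskiiMap (lam : ℝ) (T : X → X) (x : X) : X := (1 - lam) • x + lam • T x

theorem sub_krasnoselskiiMap (x : X) : x - krasnoselskiiMap lam T x = lam • (x - T x) := by
  unfold krasnoselskiiMap
  module

theorem isFixedPt_krasnoselskiiMap_iff (hlam : lam ≠ 0) {x : X} :
    IsFixedPt (krasnoselskiiMap lam T) x ↔ IsFixedPt T x := by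
  rw [IsFixedPt, IsFixedPt, eq_comm, ← sub_eq_zero, sub_krasnoselskiiMap,
    smul_eq_zero_iff_right hlam, sub_eq_zero, eq_comm]

theorem suzukiContraction_krasnoselskiiMap {b θ φ : ℝ} (hlam : 0 < lam) (hb : lam * (b + 1) = 1)
    (H : ∀ x y : X, lam * φ * ‖x - T x‖ ≤ ‖x - y‖ →
      ‖b • (x - y) + T x - T y‖ ≤ θ * ‖x - y‖) :
    SuzukiContraction (krasnoselskiiMap lam T) φ (θ * lam) := by
  intro x y hxy
  rw [dist_eq_norm, sub_krasnoselskiiMap, norm_smul, Real.norm_of_nonneg hlam.le,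
    dist_eq_norm] at hxy
  have hdiff : krasnoselskiiMap lam T x - krasnoselskiiMap lam T y =
      lam • (b • (x - y) + T x - T y) := by
    unfold krasnoselskiiMap
    rw [show 1 - lam = lam * b by linarith]
    module
  rw [dist_eq_norm, hdiff, norm_smul, Real.norm_of_nonneg hlam.le, dist_eq_norm]
  calc lam * ‖b • (x - y) + T x - T y‖ ≤ lam * (θ * ‖x - y‖) :=
        mul_le_mul_of_nonneg_left (H x y (by linarith)) hlam.le
    _ = θ * lam * ‖x - y‖ := by ring

end Krasnoselskii

theorem stmt_0_general {X : Type*} [NormedAddCommGroup X] [NormedSpace ℝ X] [CompleteSpace X]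
    (T : X → X) (b θ : ℝ) (hθ0 : 0 ≤ θ) (hθ : θ < b + 1)
    (H : ∀ x y : X,
      suzukiPsi (1 / (b + 1)) (θ * (1 / (b + 1))) * ‖x - T x‖ ≤ ‖x - y‖ →
      ‖b • (x - y) + T x - T y‖ ≤ θ * ‖x - y‖) :
    ∃! p : X, T p = p := by
  have hb1 : 0 < b + 1 := by linarith
  have hlam : 0 < 1 / (b + 1) := by positivity
  have hr1 : θ * (1 / (b + 1)) < 1 := by rwa [mul_one_div, div_lt_one hb1]
  have hS : SuzukiContraction (krasnoselskiiMap (1 / (b + 1)) T)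
      (suzukiPsi 1 (θ * (1 / (b + 1)))) (θ * (1 / (b + 1))) :=
    suzukiContraction_krasnoselskiiMap hlam (by field_simp) fun x y h =>
      H x y (by rwa [suzukiPsi_eq_mul])
  have : Nonempty X := ⟨0⟩
  have hfix := hS.existsUnique_isFixedPt_of_suzukiPsi (by positivity) hr1
  simp only [isFixedPt_krasnoselskiiMap_iff hlam.ne'] at hfix
  exact hfix

theorem stmt_0 {X : Type*} [NormedAddCommGroup X] [NormedSpace ℝ X] [CompleteSpace X]
    (T : X → X) (b θ : ℝ) (hb : 0 ≤ b) (hθ0 : 0 ≤ θ) (hθ : θ < b + 1)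
    (H : ∀ x y : X,
      suzukiPsi (1 / (b + 1)) (θ * (1 / (b + 1))) * ‖x - T x‖ ≤ ‖x - y‖ →
      ‖b • (x - y) + T x - T y‖ ≤ θ * ‖x - y‖) :
    ∃! p : X, T p = p :=
  stmt_0_general T b θ hθ0 hθ H
end

section
/- Let (X, ‖·‖) be a Banach space and T : X → CB(X) a multivalued mapping. Suppose there exist b ∈ [0, ∞) and θ ∈ [0, b+1), and set λ = 1/(b+1), r = θλ and ψ(r) = λ/(1+r), such that for all x, y ∈ X: ψ(r)·d(x, Tx) ≤ ‖x − y‖ implies H(bx + Tx, by + Ty) ≤ θ‖x − y‖, where bx + Tx denotes the set {bx + u : u ∈ Tx}. Then the fixed point set Fix(T) = {x ∈ X : x ∈ Tx} is nonempty. -/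
/-!
With `λ = 1 / (b + 1)` the hypothesis says that the averaged map `S x = λ • (b • x + T x)`,
i.e. `S x = (1 - λ) • x + λ • T x`, satisfies the Kikkawa–Suzuki condition
`d(x, S x) / (1 + r) ≤ d(x, y) → H(S x, S y) ≤ r d(x, y)` with `r = θλ < 1`, and `S` has the
same fixed points as `T`.

For such an `S` without fixed points, every `y ∈ S x` admits `z ∈ S y` with
`d(y, z) ≤ ((1 + r) / 2) d(x, y)`, so there is a Cauchy orbit `v (n + 1) ∈ S (v n)`. At its limit
`z` the condition applies to every pair `(v n, x)` with `x ≠ z` for large `n`, which gives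
`H(S x, S z) ≤ r d(x, z)`; applied with `x = v n` this forces `d(z, S z) = 0`.
-/

open Metric Set Filter Topology Pointwise

section KikkawaSuzuki

variable {Y : Type*} [MetricSpace Y]

-- The Kikkawa–Suzuki condition with `η(r) = 1 / (1 + r)`.
def IsSuzukiContraction (S : Y → Set Y) (r : ℝ) : Prop :=
  ∀ x y, infDist x (S x) / (1 + r) ≤ dist x y → hausdorffDist (S x) (S y) ≤ r * dist x y

lemma exists_orbit_of_forall_mem_dist_le {S : Y → Set Y} {c : ℝ} (hc : 0 ≤ c)
    (hstep : ∀ x y, y ∈ S x → ∃ z ∈ S y, dist y z ≤ c * dist x y) {x₀ y₀ : Y} (h₀ : y₀ ∈ S x₀) :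
    ∃ v : ℕ → Y, (∀ n, v (n + 1) ∈ S (v n)) ∧ ∀ n, dist (v n) (v (n + 1)) ≤ dist x₀ y₀ * c ^ n := by
  -- the next point depends on the last two, so iterate on pairs `(x, y)` with `y ∈ S x`
  choose g hgS hgdist using fun p : {p : Y × Y // p.2 ∈ S p.1} => hstep p.1.1 p.1.2 p.2
  let f : {p : Y × Y // p.2 ∈ S p.1} → {p : Y × Y // p.2 ∈ S p.1} :=
    fun p => ⟨(p.1.2, g p), hgS p⟩
  let w : ℕ → {p : Y × Y // p.2 ∈ S p.1} := fun n => f^[n] ⟨(x₀, y₀), h₀⟩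
  have hw : ∀ n, w (n + 1) = f (w n) := fun n => Function.iterate_succ_apply' f n _
  have hsucc : ∀ n, (w (n + 1)).1.1 = (w n).1.2 := fun n => by rw [hw]
  refine ⟨fun n => (w n).1.1, fun n => ?_, fun n => ?_⟩
  · simpa only [hsucc] using (w n).2
  induction n with
  | zero => simp [w, f]
  | succ n ih =>
    calc dist (w (n + 1)).1.1 (w (n + 1 + 1)).1.1
        = dist (w n).1.2 (g (w n)) := by rw [hsucc, hw (n + 1), hw n]
      _ ≤ c * dist (w n).1.1 (w n).1.2 := hgdist (w n)
      _ ≤ c * (dist x₀ y₀ * c ^ n) := by rw [← hsucc]; gcongr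
      _ = dist x₀ y₀ * c ^ (n + 1) := by ring

namespace IsSuzukiContraction

variable {S : Y → Set Y} {r : ℝ}

lemma hausdorffDist_le_of_mem (hS : IsSuzukiContraction S r) (hr : 0 ≤ r) {x y : Y}
    (hy : y ∈ S x) : hausdorffDist (S x) (S y) ≤ r * dist x y :=
  hS x y <| (div_le_self infDist_nonneg (by linarith)).trans (infDist_le_dist_of_mem hy)

lemma exists_mem_dist_le (hS : IsSuzukiContraction S r) (hr : 0 ≤ r)
    (hne : ∀ x, (S x).Nonempty) (hfin : ∀ x y, hausdorffEDist (S x) (S y) ≠ ⊤)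
    {c : ℝ} (hrc : r < c) {x y : Y} (hy : y ∈ S x) (hxy : x ≠ y) :
    ∃ z ∈ S y, dist y z ≤ c * dist x y := by
  have hlt : infDist y (S y) < c * dist x y := calc
    infDist y (S y) ≤ hausdorffDist (S x) (S y) := infDist_le_hausdorffDist_of_mem hy (hfin x y)
    _ ≤ r * dist x y := hS.hausdorffDist_le_of_mem hr hy
    _ < c * dist x y := by gcongr; exact dist_pos.2 hxy
  obtain ⟨z, hz, hyz⟩ := (infDist_lt_iff (hne y)).1 hlt
  exact ⟨z, hz, hyz.le⟩

lemma infDist_le_of_tendsto (hS : IsSuzukiContraction S r) (hr : 0 ≤ r)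
    (hfin : ∀ x y, hausdorffEDist (S x) (S y) ≠ ⊤) {v : ℕ → Y} (hv : ∀ n, v (n + 1) ∈ S (v n))
    {z : Y} (hvz : Tendsto v atTop (𝓝 z)) {x : Y} (hx : x ≠ z) :
    infDist z (S x) ≤ r * dist z x := by
  have hstep : Tendsto (fun n => dist (v n) (v (n + 1))) atTop (𝓝 0) := by
    simpa using hvz.dist (hvz.comp (tendsto_add_atTop_nat 1))
  have hfar : ∀ᶠ n in atTop, dist (v n) (v (n + 1)) < dist (v n) x :=
    hstep.eventually_lt (hvz.dist tendsto_const_nhds) (dist_pos.2 hx.symm)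
  have hlim : Tendsto (fun n => dist (v (n + 1)) z + r * dist (v n) x) atTop
      (𝓝 (r * dist z x)) := by
    simpa using ((hvz.comp (tendsto_add_atTop_nat 1)).dist (tendsto_const_nhds (x := z))).add
      ((hvz.dist tendsto_const_nhds).const_mul r)
  refine ge_of_tendsto hlim ?_
  filter_upwards [hfar] with n hn
  have hprem : infDist (v n) (S (v n)) / (1 + r) ≤ dist (v n) x :=
    (div_le_self infDist_nonneg (by linarith)).trans
      ((infDist_le_dist_of_mem (hv n)).trans hn.le)
  calc infDist z (S x) ≤ infDist z (S (v n)) + hausdorffDist (S (v n)) (S x) :=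
        infDist_le_infDist_add_hausdorffDist (hfin _ _)
    _ ≤ dist z (v (n + 1)) + r * dist (v n) x :=
        add_le_add (infDist_le_dist_of_mem (hv n)) (hS _ _ hprem)
    _ = dist (v (n + 1)) z + r * dist (v n) x := by rw [dist_comm]

lemma hausdorffDist_le_of_tendsto (hS : IsSuzukiContraction S r) (hr : 0 ≤ r)
    (hfin : ∀ x y, hausdorffEDist (S x) (S y) ≠ ⊤) {v : ℕ → Y} (hv : ∀ n, v (n + 1) ∈ S (v n))
    {z : Y} (hvz : Tendsto v atTop (𝓝 z)) {x : Y} (hx : x ≠ z) :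
    hausdorffDist (S x) (S z) ≤ r * dist x z := by
  refine hS x z ?_
  rw [div_le_iff₀ (by linarith)]
  have hzx := hS.infDist_le_of_tendsto hr hfin hv hvz hx
  calc infDist x (S x) ≤ infDist z (S x) + dist x z := infDist_le_infDist_add_dist
    _ ≤ dist x z * (1 + r) := by rw [dist_comm z x] at hzx; linarith

lemma mem_of_tendsto (hS : IsSuzukiContraction S r) (hr : 0 ≤ r)
    (hfin : ∀ x y, hausdorffEDist (S x) (S y) ≠ ⊤) {v : ℕ → Y} (hv : ∀ n, v (n + 1) ∈ S (v n))
    {z : Y} (hvz : Tendsto v atTop (𝓝 z)) (hcl : IsClosed (S z)) (hne : (S z).Nonempty) :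
    z ∈ S z := by
  have hlim : Tendsto (fun n => dist z (v (n + 1)) + r * dist (v n) z) atTop (𝓝 0) := by
    simpa using ((tendsto_const_nhds (x := z)).dist (hvz.comp (tendsto_add_atTop_nat 1))).add
      ((hvz.dist (tendsto_const_nhds (x := z))).const_mul r)
  have hbound : ∀ n, infDist z (S z) ≤ dist z (v (n + 1)) + r * dist (v n) z := fun n => by
    rcases eq_or_ne (v n) z with hn | hn
    · have hz := infDist_le_dist_of_mem (x := z) (hn ▸ hv n)
      nlinarith [dist_nonneg (x := v n) (y := z)]
    · calc infDist z (S z) ≤ infDist z (S (v n)) + hausdorffDist (S (v n)) (S z) :=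
            infDist_le_infDist_add_hausdorffDist (hfin _ _)
        _ ≤ dist z (v (n + 1)) + r * dist (v n) z :=
            add_le_add (infDist_le_dist_of_mem (hv n))
              (hS.hausdorffDist_le_of_tendsto hr hfin hv hvz hn)
  refine (hcl.mem_iff_infDist_zero hne).2 (le_antisymm ?_ infDist_nonneg)
  exact ge_of_tendsto hlim (Eventually.of_forall hbound)

theorem exists_mem_self [CompleteSpace Y] [Nonempty Y] (hS : IsSuzukiContraction S r)
    (hr₀ : 0 ≤ r) (hr₁ : r < 1) (hne : ∀ x, (S x).Nonempty) (hcl : ∀ x, IsClosed (S x))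
    (hfin : ∀ x y, hausdorffEDist (S x) (S y) ≠ ⊤) : ∃ z, z ∈ S z := by
  by_contra! hfix
  have hstep : ∀ x y, y ∈ S x → ∃ z ∈ S y, dist y z ≤ (1 + r) / 2 * dist x y :=
    fun x y hy =>
      hS.exists_mem_dist_le hr₀ hne hfin (by linarith) hy (by rintro rfl; exact hfix x hy)
  obtain ⟨y₀, hy₀⟩ := hne (Classical.arbitrary Y)
  obtain ⟨v, hv, hvdist⟩ := exists_orbit_of_forall_mem_dist_le (by linarith) hstep hy₀
  obtain ⟨z, hvz⟩ :=
    cauchySeq_tendsto_of_complete (cauchySeq_of_le_geometric _ _ (by linarith) hvdist)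
  exact hfix z (hS.mem_of_tendsto hr₀ hfin hv hvz (hcl z) (hne z))

end IsSuzukiContraction

end KikkawaSuzuki

section HausdorffDistSmul

variable {𝕜 E : Type*} [NormedDivisionRing 𝕜] [SeminormedAddCommGroup E] [Module 𝕜 E]
  [NormSMulClass 𝕜 E]

theorem hausdorffEDist_smul₀ {c : 𝕜} (hc : c ≠ 0) (s t : Set E) :
    hausdorffEDist (c • s) (c • t) = ‖c‖₊ • hausdorffEDist s t := by
  have iSup_smul_set (u : Set E) (f : E → ENNReal) : ⨆ x ∈ c • u, f x = ⨆ x ∈ u, f (c • x) := by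
    rw [← image_smul, iSup_image]
  simp only [hausdorffEDist_def, iSup_smul_set, infEDist_smul₀ hc, ENNReal.smul_def, smul_eq_mul,
    ← ENNReal.mul_iSup, max_mul_mul_left]

theorem hausdorffDist_smul₀ {c : 𝕜} (hc : c ≠ 0) (s t : Set E) :
    hausdorffDist (c • s) (c • t) = ‖c‖ * hausdorffDist s t := by
  simp_rw [hausdorffDist, hausdorffEDist_smul₀ hc, ENNReal.toReal_smul, NNReal.smul_def,
    coe_nnnorm, smul_eq_mul]

end HausdorffDistSmul

section AveragedMap

variable {X : Type*} [NormedAddCommGroup X] [NormedSpace ℝ X] {T : X → Set X} {b : ℝ}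

def averagedMap (T : X → Set X) (b : ℝ) (x : X) : Set X :=
  (b + 1)⁻¹ • ((b • x + ·) '' T x)

lemma mem_averagedMap_self_iff (hb : b + 1 ≠ 0) {x : X} : x ∈ averagedMap T b x ↔ x ∈ T x := by
  rw [averagedMap, mem_smul_set_iff_inv_smul_mem₀ (inv_ne_zero hb), inv_inv, image_add_left,
    mem_preimage, add_smul, one_smul, neg_add_cancel_left]

lemma infDist_averagedMap_self (hb : 0 < b + 1) (x : X) :
    infDist x (averagedMap T b x) = (b + 1)⁻¹ * infDist x (T x) := by
  have hx : (b + 1)⁻¹ • (b • x + x) = x := by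
    rw [show b • x + x = (b + 1) • x by rw [add_smul, one_smul], inv_smul_smul₀ hb.ne']
  calc infDist x (averagedMap T b x)
      = infDist ((b + 1)⁻¹ • (b • x + x)) ((b + 1)⁻¹ • ((b • x + ·) '' T x)) := by rw [hx]; rfl
    _ = (b + 1)⁻¹ * infDist x (T x) := by
      rw [infDist_smul₀ (inv_ne_zero hb.ne'), infDist_image (isometry_add_left _),
        Real.norm_of_nonneg (inv_nonneg.2 hb.le)]

lemma hausdorffDist_averagedMap (hb : 0 < b + 1) (x y : X) :
    hausdorffDist (averagedMap T b x) (averagedMap T b y) =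
      (b + 1)⁻¹ * hausdorffDist ((b • x + ·) '' T x) ((b • y + ·) '' T y) := by
  rw [averagedMap, averagedMap, hausdorffDist_smul₀ (inv_ne_zero hb.ne'),
    Real.norm_of_nonneg (inv_nonneg.2 hb.le)]

lemma isSuzukiContraction_averagedMap {θ : ℝ} (hb : 0 < b + 1)
    (H : ∀ x y : X,
      (1 / (b + 1)) / (1 + θ * (1 / (b + 1))) * infDist x (T x) ≤ ‖x - y‖ →
      hausdorffDist ((fun u => b • x + u) '' T x) ((fun u => b • y + u) '' T y) ≤ θ * ‖x - y‖) :
    IsSuzukiContraction (averagedMap T b) (θ * (b + 1)⁻¹) := by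
  intro x y hxy
  rw [infDist_averagedMap_self hb, dist_eq_norm] at hxy
  rw [hausdorffDist_averagedMap hb, dist_eq_norm, mul_comm θ, mul_assoc]
  refine mul_le_mul_of_nonneg_left (H x y ?_) (inv_nonneg.2 hb.le)
  convert hxy using 1
  ring

lemma hausdorffEDist_averagedMap_ne_top (hne : ∀ x, (T x).Nonempty)
    (hbd : ∀ x, Bornology.IsBounded (T x)) (x y : X) :
    hausdorffEDist (averagedMap T b x) (averagedMap T b y) ≠ ⊤ := by
  have hbd' (z : X) : Bornology.IsBounded (averagedMap T b z) :=
    ((isometry_add_left _).lipschitz.isBounded_image (hbd z)).smul₀ _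
  exact hausdorffEDist_ne_top_of_nonempty_of_bounded (((hne x).image _).smul_set)
    (((hne y).image _).smul_set) (hbd' x) (hbd' y)

lemma isClosed_averagedMap (hb : b + 1 ≠ 0) (hcl : ∀ x, IsClosed (T x)) (x : X) :
    IsClosed (averagedMap T b x) :=
  ((Homeomorph.addLeft (b • x)).isClosedMap _ (hcl x)).smul_of_ne_zero (inv_ne_zero hb)

end AveragedMap

theorem stmt_6_general {X : Type*} [NormedAddCommGroup X] [NormedSpace ℝ X] [CompleteSpace X]
    (T : X → Set X)
    (hne : ∀ x : X, (T x).Nonempty)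
    (hcl : ∀ x : X, IsClosed (T x))
    (hbd : ∀ x : X, Bornology.IsBounded (T x))
    (b θ : ℝ) (hθ0 : 0 ≤ θ) (hθ : θ < b + 1)
    (H : ∀ x y : X,
      (1 / (b + 1)) / (1 + θ * (1 / (b + 1))) * Metric.infDist x (T x) ≤ ‖x - y‖ →
      Metric.hausdorffDist ((fun u => b • x + u) '' T x) ((fun u => b • y + u) '' T y)
        ≤ θ * ‖x - y‖) :
    ∃ x : X, x ∈ T x := by
  have hb₁ : 0 < b + 1 := by linarith
  have hr₁ : θ * (b + 1)⁻¹ < 1 := by rwa [← div_eq_mul_inv, div_lt_one hb₁]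
  obtain ⟨z, hz⟩ := (isSuzukiContraction_averagedMap hb₁ H).exists_mem_self (by positivity) hr₁
    (fun x => ((hne x).image _).smul_set) (isClosed_averagedMap hb₁.ne' hcl)
    (hausdorffEDist_averagedMap_ne_top hne hbd)
  exact ⟨z, (mem_averagedMap_self_iff hb₁.ne').1 hz⟩

theorem stmt_6 {X : Type*} [NormedAddCommGroup X] [NormedSpace ℝ X] [CompleteSpace X]
    (T : X → Set X)
    (hne : ∀ x : X, (T x).Nonempty)
    (hcl : ∀ x : X, IsClosed (T x))
    (hbd : ∀ x : X, Bornology.IsBounded (T x))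
    (b θ : ℝ) (hb : 0 ≤ b) (hθ0 : 0 ≤ θ) (hθ : θ < b + 1)
    (H : ∀ x y : X,
      (1 / (b + 1)) / (1 + θ * (1 / (b + 1))) * Metric.infDist x (T x) ≤ ‖x - y‖ →
      Metric.hausdorffDist ((fun u => b • x + u) '' T x) ((fun u => b • y + u) '' T y)
        ≤ θ * ‖x - y‖) :
    ∃ x : X, x ∈ T x :=
  stmt_6_general T hne hcl hbd b θ hθ0 hθ H
end

section
/- Let (X, ‖·‖) be a Banach space and T : X → CB(X) a multivalued mapping. Suppose there exist b ∈ [0, ∞), γ ∈ (0, 1) and θ ∈ [0, b+1), with λ = 1/(b+1), such that (θλ + 1)γ ≤ 1 and for all x, y ∈ X: γλ·d(x, Tx) ≤ ‖x − y‖ implies H(bx + Tx, by + Ty) ≤ θ‖x − y‖, where bx + Tx denotes the set {bx + u : u ∈ Tx}. Then the fixed point set Fix(T) = {x ∈ X : x ∈ Tx} is nonempty. -/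
open Pointwise in
set_option maxHeartbeats 1600000 in
theorem stmt_7 {X : Type*} [NormedAddCommGroup X] [NormedSpace ℝ X] [CompleteSpace X]
    (T : X → Set X)
    (hne : ∀ x : X, (T x).Nonempty)
    (hcl : ∀ x : X, IsClosed (T x))
    (hbd : ∀ x : X, Bornology.IsBounded (T x))
    (b γ θ : ℝ) (hb : 0 ≤ b) (hγ : γ ∈ Set.Ioo (0 : ℝ) 1)
    (hθ0 : 0 ≤ θ) (hθ : θ < b + 1)
    (hγθ : (θ * (1 / (b + 1)) + 1) * γ ≤ 1)
    (H : ∀ x y : X,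
      γ * (1 / (b + 1)) * Metric.infDist x (T x) ≤ ‖x - y‖ →
      Metric.hausdorffDist ((fun u => b • x + u) '' T x) ((fun u => b • y + u) '' T y)
        ≤ θ * ‖x - y‖) :
    ∃ x : X, x ∈ T x := by
  by_contra hcon
  push_neg at hcon
  have hb1 : (0:ℝ) < b + 1 := by linarith
  set lam : ℝ := 1 / (b + 1) with hlamdef
  have hlam_pos : 0 < lam := by rw [hlamdef]; positivity
  -- infDist is positive everywhere (no fixed point)
  have hpos : ∀ x : X, 0 < Metric.infDist x (T x) := by
    intro x
    rcases lt_or_eq_of_le (Metric.infDist_nonneg (x := x) (s := T x)) with h | h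
    · exact h
    · exfalso
      apply hcon x
      have : x ∈ closure (T x) := by
        rw [Metric.mem_closure_iff_infDist_zero (hne x)]
        exact h.symm
      rwa [(hcl x).closure_eq] at this
  -- constants
  have hθ' : θ * lam < 1 := by
    rw [hlamdef]
    rw [mul_one_div]
    exact (div_lt_one hb1).2 hθ
  have hθ'0 : 0 ≤ θ * lam := mul_nonneg hθ0 hlam_pos.le
  set θ₁ : ℝ := max (θ * lam) (1/2) with hθ₁def
  have hθ₁0 : 0 < θ₁ := lt_max_of_lt_right (by norm_num)
  have hθ₁1 : θ₁ < 1 := max_lt hθ' (by norm_num)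
  have hθ'le : θ * lam ≤ θ₁ := le_max_left _ _
  set c : ℝ := (1 + θ₁) / (2 * θ₁) with hcdef
  have hc1 : 1 < c := by
    rw [hcdef, lt_div_iff₀ (by linarith)]
    linarith
  set ρ : ℝ := (1 + θ₁) / 2 with hρdef
  have hρ1 : ρ < 1 := by rw [hρdef]; linarith
  have hρ0 : 0 < ρ := by rw [hρdef]; linarith
  have hcθ : c * (θ * lam) ≤ ρ := by
    have hcθ₁ : c * θ₁ = ρ := by
      rw [hcdef, hρdef]; field_simp
    have hc0 : 0 ≤ c := by linarith
    calc c * (θ * lam) ≤ c * θ₁ := mul_le_mul_of_nonneg_left hθ'le hc0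
      _ = ρ := hcθ₁
  -- choice of nearly-optimal points
  have hchoice : ∀ x : X, ∃ u ∈ T x, dist x u < c * Metric.infDist x (T x) := by
    intro x
    rw [← Metric.infDist_lt_iff (hne x)]
    nlinarith [hpos x]
  choose w hw hwd using hchoice
  set g : X → X := fun x => (b + 1)⁻¹ • (b • x + w x) with hgdef
  have fact1 : ∀ x : X, (b + 1) • g x = b • x + w x := by
    intro x
    rw [hgdef]
    simp only
    rw [smul_inv_smul₀ hb1.ne']
  have fact1' : ∀ x : X, (b + 1) • (x - g x) = x - w x := by
    intro x
    rw [smul_sub, fact1]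
    module
  have fact2 : ∀ x : X, ‖x - g x‖ = lam * ‖x - w x‖ := by
    intro x
    have := congrArg norm (fact1' x)
    rw [norm_smul, Real.norm_eq_abs, abs_of_pos hb1] at this
    rw [hlamdef]
    field_simp
    linarith [this]
  -- translation invariance of infDist
  have tranid : ∀ (y v : X) (s : Set X),
      Metric.infDist (y + v) ((fun u => y + u) '' s) = Metric.infDist v s := by
    intro y v s
    exact Metric.infDist_image (Isometry.of_dist_eq fun a b' => dist_add_left y a b')
  -- finiteness of Hausdorff edist between translated sets
  have hAne : ∀ x : X, ((fun u => b • x + u) '' T x).Nonempty := fun x => (hne x).image _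
  have hAbd : ∀ x : X, Bornology.IsBounded ((fun u => b • x + u) '' T x) := by
    intro x
    have : (fun u => b • x + u) '' T x = ({b • x} : Set X) + T x := by
      rw [Set.singleton_add]
    rw [this]
    exact Bornology.isBounded_singleton.add (hbd x)
  have hfin : ∀ x y : X,
      EMetric.hausdorffEdist ((fun u => b • x + u) '' T x) ((fun u => b • y + u) '' T y) ≠ ⊤ :=
    fun x y => Metric.hausdorffEdist_ne_top_of_nonempty_of_bounded (hAne x) (hAne y)
      (hAbd x) (hAbd y)
  -- the point (b+1) • g x lies in the translated set at x
  have hmem : ∀ x : X, (b + 1) • g x ∈ (fun u => b • x + u) '' T x := by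
    intro x
    rw [fact1]
    exact ⟨w x, hw x, rfl⟩
  -- infDist y (T y) in terms of translated set
  have htran : ∀ y : X,
      Metric.infDist ((b + 1) • y) ((fun u => b • y + u) '' T y) = Metric.infDist y (T y) := by
    intro y
    have h1 : (b + 1) • y = b • y + y := by module
    rw [h1, tranid]
  -- step estimate
  have step : ∀ x : X, Metric.infDist (g x) (T (g x)) ≤ θ * ‖x - g x‖ := by
    intro x
    have hinf_le : Metric.infDist x (T x) ≤ ‖x - w x‖ := by
      have := Metric.infDist_le_dist_of_mem (x := x) (hw x)
      rwa [dist_eq_norm] at this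
    have hcond : γ * lam * Metric.infDist x (T x) ≤ ‖x - g x‖ := by
      rw [fact2]
      have h1 : γ * lam * Metric.infDist x (T x) ≤ 1 * (lam * Metric.infDist x (T x)) := by
        have : γ * (lam * Metric.infDist x (T x)) ≤ 1 * (lam * Metric.infDist x (T x)) :=
          mul_le_mul_of_nonneg_right hγ.2.le
            (mul_nonneg hlam_pos.le Metric.infDist_nonneg)
        linarith [this]
      have h2 : lam * Metric.infDist x (T x) ≤ lam * ‖x - w x‖ :=
        mul_le_mul_of_nonneg_left hinf_le hlam_pos.le
      linarith
    have hH := H x (g x) hcond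
    calc Metric.infDist (g x) (T (g x))
        = Metric.infDist ((b + 1) • g x) ((fun u => b • g x + u) '' T (g x)) :=
          (htran (g x)).symm
      _ ≤ Metric.hausdorffDist ((fun u => b • x + u) '' T x) ((fun u => b • g x + u) '' T (g x)) :=
          Metric.infDist_le_hausdorffDist_of_mem (hmem x) (hfin x (g x))
      _ ≤ θ * ‖x - g x‖ := hH
  -- geometric decay
  have decay : ∀ x : X, ‖g x - g (g x)‖ ≤ ρ * ‖x - g x‖ := by
    intro x
    have h1 : ‖g x - g (g x)‖ = lam * ‖g x - w (g x)‖ := fact2 (g x)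
    have h2 : ‖g x - w (g x)‖ ≤ c * Metric.infDist (g x) (T (g x)) := by
      have := hwd (g x)
      rw [dist_eq_norm] at this
      linarith
    have h3 := step x
    calc ‖g x - g (g x)‖ = lam * ‖g x - w (g x)‖ := h1
      _ ≤ lam * (c * Metric.infDist (g x) (T (g x))) :=
          mul_le_mul_of_nonneg_left h2 hlam_pos.le
      _ ≤ lam * (c * (θ * ‖x - g x‖)) := by
          apply mul_le_mul_of_nonneg_left _ hlam_pos.le
          exact mul_le_mul_of_nonneg_left h3 (by linarith)
      _ = (c * (θ * lam)) * ‖x - g x‖ := by ring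
      _ ≤ ρ * ‖x - g x‖ := mul_le_mul_of_nonneg_right hcθ (norm_nonneg _)
  -- the iteration sequence
  set seq : ℕ → X := fun n => g^[n] 0 with hseqdef
  have hseq_succ : ∀ n : ℕ, seq (n + 1) = g (seq n) := by
    intro n
    rw [hseqdef]
    exact Function.iterate_succ_apply' g n 0
  set D : ℝ := ‖(0 : X) - g 0‖ with hDdef
  have hdistn : ∀ n : ℕ, dist (seq n) (seq (n + 1)) ≤ D * ρ ^ n := by
    intro n
    induction n with
    | zero =>
      have h0 : seq 0 = 0 := rfl
      simp only [pow_zero, mul_one]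
      rw [hseq_succ, dist_eq_norm, h0, hDdef]
    | succ n ih =>
      have ih' : ‖seq n - seq (n + 1)‖ ≤ D * ρ ^ n := by
        rwa [dist_eq_norm] at ih
      calc dist (seq (n + 1)) (seq (n + 2))
          = ‖seq (n + 1) - g (seq (n + 1))‖ := by rw [hseq_succ (n + 1), dist_eq_norm]
        _ ≤ ρ * ‖seq n - seq (n + 1)‖ := by
            rw [hseq_succ n]; exact decay (seq n)
        _ ≤ ρ * (D * ρ ^ n) := mul_le_mul_of_nonneg_left ih' hρ0.le
        _ = D * ρ ^ (n + 1) := by ring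
  have hcauchy : CauchySeq seq := cauchySeq_of_le_geometric ρ D hρ1 hdistn
  obtain ⟨z, hz⟩ := cauchySeq_tendsto_of_complete hcauchy
  -- dichotomy
  have dich : ∀ n : ℕ,
      γ * lam * Metric.infDist (seq n) (T (seq n)) ≤ ‖seq n - z‖ ∨
      γ * lam * Metric.infDist (seq (n + 1)) (T (seq (n + 1))) ≤ ‖seq (n + 1) - z‖ := by
    intro n
    by_contra hcc
    push_neg at hcc
    obtain ⟨h1, h2⟩ := hcc
    set a := seq n with hadef
    have hy : seq (n + 1) = g a := hseq_succ n
    rw [hy] at h2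
    set dn := ‖a - g a‖ with hdndef
    have hA : lam * Metric.infDist a (T a) ≤ dn := by
      have hinf_le : Metric.infDist a (T a) ≤ ‖a - w a‖ := by
        have := Metric.infDist_le_dist_of_mem (x := a) (hw a)
        rwa [dist_eq_norm] at this
      rw [hdndef, fact2]
      exact mul_le_mul_of_nonneg_left hinf_le hlam_pos.le
    have hB : Metric.infDist (g a) (T (g a)) ≤ θ * dn := step a
    have htri : dn ≤ ‖a - z‖ + ‖g a - z‖ := by
      have : a - g a = (a - z) - (g a - z) := by abel
      rw [hdndef, this]
      exact norm_sub_le _ _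
    have hγ0 := hγ.1
    have e1 : γ * (lam * Metric.infDist a (T a)) ≤ γ * dn :=
      mul_le_mul_of_nonneg_left hA hγ0.le
    have e2 : γ * lam * Metric.infDist (g a) (T (g a)) ≤ γ * lam * (θ * dn) :=
      mul_le_mul_of_nonneg_left hB (mul_nonneg hγ0.le hlam_pos.le)
    have e3 : (θ * lam + 1) * γ * dn ≤ 1 * dn := by
      apply mul_le_mul_of_nonneg_right _ (norm_nonneg _)
      exact hγθ
    nlinarith [h1, h2, htri, e1, e2, e3]
  -- conclusion: infDist z (T z) = 0
  have hzero : Metric.infDist z (T z) ≤ 0 := by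
    apply le_of_forall_pos_le_add
    intro ε hε
    have hbθ : (0:ℝ) < b + θ + 2 := by linarith
    obtain ⟨ε', hε', hε'eq⟩ : ∃ e : ℝ, 0 < e ∧ (b + θ + 2) * e = ε :=
      ⟨ε / (b + θ + 2), by positivity, by rw [mul_comm, div_mul_cancel₀ _ hbθ.ne']⟩
    obtain ⟨N, hN⟩ := Metric.tendsto_atTop.mp hz ε' hε'
    have key : ∀ m : ℕ, N ≤ m →
        γ * lam * Metric.infDist (seq m) (T (seq m)) ≤ ‖seq m - z‖ →
        Metric.infDist z (T z) ≤ 0 + ε := by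
      intro m hm hcondm
      have hHm := H (seq m) z hcondm
      have hmz : ‖seq m - z‖ < ε' := by
        have := hN m hm
        rwa [dist_eq_norm] at this
      have hm1z : ‖seq (m + 1) - z‖ < ε' := by
        have := hN (m + 1) (le_trans hm (Nat.le_succ m))
        rwa [dist_eq_norm] at this
      have hHm' : Metric.hausdorffDist ((fun u => b • seq m + u) '' T (seq m))
          ((fun u => b • z + u) '' T z) ≤ θ * ε' := by
        calc Metric.hausdorffDist _ _ ≤ θ * ‖seq m - z‖ := hHm
          _ ≤ θ * ε' := mul_le_mul_of_nonneg_left hmz.le hθ0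
      have hp : (b + 1) • seq (m + 1) ∈ (fun u => b • seq m + u) '' T (seq m) := by
        rw [hseq_succ]
        exact hmem (seq m)
      have h4 : Metric.infDist ((b + 1) • seq (m + 1)) ((fun u => b • z + u) '' T z) ≤ θ * ε' :=
        le_trans (Metric.infDist_le_hausdorffDist_of_mem hp (hfin (seq m) z)) hHm'
      have h5 : dist ((b + 1) • z) ((b + 1) • seq (m + 1)) ≤ (b + 1) * ε' := by
        rw [dist_smul₀, Real.norm_eq_abs, abs_of_pos hb1, dist_eq_norm]
        have : ‖z - seq (m + 1)‖ = ‖seq (m + 1) - z‖ := norm_sub_rev _ _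
        rw [this]
        exact mul_le_mul_of_nonneg_left hm1z.le hb1.le
      calc Metric.infDist z (T z)
          = Metric.infDist ((b + 1) • z) ((fun u => b • z + u) '' T z) := (htran z).symm
        _ ≤ Metric.infDist ((b + 1) • seq (m + 1)) ((fun u => b • z + u) '' T z)
              + dist ((b + 1) • z) ((b + 1) • seq (m + 1)) :=
            Metric.infDist_le_infDist_add_dist
        _ ≤ θ * ε' + (b + 1) * ε' := add_le_add h4 h5
        _ ≤ (b + θ + 2) * ε' := by nlinarith [hε'.le]
        _ = ε := hε'eq
        _ = 0 + ε := by ring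
    rcases dich N with h | h
    · exact key N le_rfl h
    · exact key (N + 1) (Nat.le_succ N) h
  exfalso
  apply hcon z
  have hz0 : Metric.infDist z (T z) = 0 :=
    le_antisymm hzero Metric.infDist_nonneg
  have : z ∈ closure (T z) := (Metric.mem_closure_iff_infDist_zero (hne z)).2 hz0
  rwa [(hcl z).closure_eq] at this
end

section
/- Let (X, d) be a compact metric space and T : X → X a mapping. Suppose that for all x, y ∈ X: (1/2)d(x, Tx) < d(x, y) implies d(Tx, Ty) < d(x, y). Then T has a unique fixed point. -/
open Filter Topology

theorem stmt_11 {X : Type*} [MetricSpace X] [CompactSpace X] [Nonempty X]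
    (T : X → X)
    (H : ∀ x y : X, (1 / 2) * dist x (T x) < dist x y → dist (T x) (T y) < dist x y) :
    ∃! p : X, T p = p := by
  -- basic consequence: iterates do not increase displacement
  have key : ∀ x : X, dist (T x) (T (T x)) ≤ dist x (T x) := by
    intro x
    rcases eq_or_ne x (T x) with h | h
    · simp [← h]
    · have hd : 0 < dist x (T x) := dist_pos.2 h
      have := H x (T x) (by linarith)
      linarith
  set β := ⨅ x : X, dist x (T x) with hβdef
  have hbdd : BddBelow (Set.range fun x : X => dist x (T x)) :=
    ⟨0, by rintro _ ⟨x, rfl⟩; exact dist_nonneg⟩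
  have hβle : ∀ x : X, β ≤ dist x (T x) := fun x => ciInf_le hbdd x
  have hβ0 : 0 ≤ β := le_ciInf fun x => dist_nonneg
  have hex : ∀ n : ℕ, ∃ x : X, dist x (T x) < β + 1 / (n + 1) := by
    intro n
    apply exists_lt_of_ciInf_lt
    have : (0 : ℝ) < 1 / (n + 1) := by positivity
    linarith
  choose u hu using hex
  have htend : Tendsto (fun n : ℕ => dist (u n) (T (u n))) atTop (𝓝 β) := by
    have h0 : Tendsto (fun n : ℕ => β + 1 / (n + 1 : ℝ)) atTop (𝓝 (β + 0)) :=
      tendsto_const_nhds.add tendsto_one_div_add_atTop_nhds_zero_nat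
    rw [add_zero] at h0
    exact tendsto_of_tendsto_of_tendsto_of_le_of_le tendsto_const_nhds h0
      (fun n => hβle (u n)) (fun n => (hu n).le)
  obtain ⟨v, -, φ, hφ, hconv1⟩ := isCompact_univ.tendsto_subseq (fun n => Set.mem_univ (u n))
  obtain ⟨w, -, ψ, hψ, hconv2⟩ :=
    isCompact_univ.tendsto_subseq (fun n => Set.mem_univ (T (u (φ n))))
  set s : ℕ → X := fun n => u (φ (ψ n)) with hs
  have hsv : Tendsto s atTop (𝓝 v) := hconv1.comp hψ.tendsto_atTop
  have hTsw : Tendsto (fun n => T (s n)) atTop (𝓝 w) := hconv2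
  have hds : Tendsto (fun n => dist (s n) (T (s n))) atTop (𝓝 β) :=
    htend.comp ((hφ.comp hψ).tendsto_atTop)
  have hvw : dist v w = β := tendsto_nhds_unique (hsv.dist hTsw) hds
  have hsw : Tendsto (fun n => dist (s n) w) atTop (𝓝 β) := by
    have := hsv.dist (tendsto_const_nhds : Tendsto (fun _ : ℕ => w) atTop (𝓝 w))
    rwa [hvw] at this
  -- β = 0
  have hβeq : β = 0 := by
    by_contra hb
    have hβpos : 0 < β := lt_of_le_of_ne hβ0 (Ne.symm hb)
    have hA : ∀ᶠ n in atTop, (1 / 2) * dist (s n) (T (s n)) < dist (s n) w := by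
      have h1 : Tendsto (fun n => (1 / 2 : ℝ) * dist (s n) (T (s n))) atTop (𝓝 ((1 / 2) * β)) :=
        hds.const_mul _
      exact h1.eventually_lt hsw (by linarith)
    have hwTw : dist w (T w) ≤ β := by
      have hev : ∀ᶠ n in atTop, dist (T (s n)) (T w) ≤ dist (s n) w :=
        hA.mono fun n hn => (H _ _ hn).le
      have h3 : Tendsto (fun n => dist (T (s n)) (T w)) atTop (𝓝 (dist w (T w))) :=
        hTsw.dist tendsto_const_nhds
      exact le_of_tendsto_of_tendsto h3 hsw hev
    have hwβ : dist w (T w) = β := le_antisymm hwTw (hβle w)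
    have h5 := H w (T w) (by rw [hwβ]; linarith)
    have h6 := hβle (T w)
    rw [hwβ] at h5
    linarith
  have hwv : w = v := by
    have : dist v w = 0 := by rw [hvw, hβeq]
    exact (dist_eq_zero.1 this).symm
  rw [hwv] at hTsw
  rw [hβeq] at hds
  -- T v = v
  have hfix : T v = v := by
    by_contra hv
    have hv' : v ≠ T v := fun h => hv h.symm
    have halt : ∀ n, (1 / 2) * dist (s n) (T (s n)) < dist (s n) v ∨
        (1 / 2) * dist (T (s n)) (T (T (s n))) < dist (T (s n)) v := by
      intro n
      by_contra hcon
      push_neg at hcon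
      obtain ⟨h1, h2⟩ := hcon
      rcases eq_or_ne (s n) (T (s n)) with he | he
      · have hz : dist (s n) (T (s n)) = 0 := by rw [← he, dist_self]
        have hsv0 : s n = v := by
          rw [hz] at h1
          have : dist (s n) v ≤ 0 := by linarith
          exact dist_le_zero.1 this
        exact hv (by rw [← hsv0]; exact he.symm)
      · have hsp : 0 < dist (s n) (T (s n)) := dist_pos.2 he
        have hst : dist (T (s n)) (T (T (s n))) < dist (s n) (T (s n)) :=
          H _ _ (by linarith)
        have htri := dist_triangle (s n) v (T (s n))
        have hc := dist_comm v (T (s n))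
        linarith
    have hbound : ∀ n, dist (T v) v <
        dist (s n) v + 2 * dist (T (s n)) v + dist (s n) (T (s n)) := by
      intro n
      rcases halt n with h1 | h2
      · have hH := H (s n) v h1
        have htri := dist_triangle (T v) (T (s n)) v
        have hc := dist_comm (T v) (T (s n))
        have hn1 : (0 : ℝ) ≤ dist (T (s n)) v := dist_nonneg
        have hn2 : (0 : ℝ) ≤ dist (s n) (T (s n)) := dist_nonneg
        linarith
      · have hH := H (T (s n)) v h2
        have htri := dist_triangle (T v) (T (T (s n))) v
        have hc := dist_comm (T v) (T (T (s n)))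
        have htri2 := dist_triangle (T (T (s n))) (T (s n)) v
        have hc2 := dist_comm (T (T (s n))) (T (s n))
        have hk := key (s n)
        have hn1 : (0 : ℝ) ≤ dist (s n) v := dist_nonneg
        linarith
    have hsvd : Tendsto (fun n => dist (s n) v) atTop (𝓝 0) := by
      simpa using hsv.dist (tendsto_const_nhds : Tendsto (fun _ : ℕ => v) atTop (𝓝 v))
    have hTsvd : Tendsto (fun n => dist (T (s n)) v) atTop (𝓝 0) := by
      simpa using hTsw.dist (tendsto_const_nhds : Tendsto (fun _ : ℕ => v) atTop (𝓝 v))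
    have hcsum : Tendsto
        (fun n => dist (s n) v + 2 * dist (T (s n)) v + dist (s n) (T (s n)))
        atTop (𝓝 0) := by
      have := (hsvd.add (hTsvd.const_mul 2)).add hds
      simpa using this
    have hle : dist (T v) v ≤ 0 :=
      ge_of_tendsto hcsum (Eventually.of_forall fun n => (hbound n).le)
    exact hv (dist_le_zero.1 hle)
  refine ⟨v, hfix, ?_⟩
  intro y hy
  by_contra hne
  have hd : 0 < dist y v := dist_pos.2 hne
  have hH := H y v (by rw [hy, dist_self]; linarith)
  rw [hy, hfix] at hH
  exact lt_irrefl _ hH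
end
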